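/- Let C be a reduced combinatorial code on n neurons and let i ∈ [n]. Define, for c ∈ C, g(c) = (c ∖ {i}) ∪ ⋃ { √[C]({i,j}) : j ∈ [n], {i,j} ⊆ c, tk_C({i,j}) ≠ tk_C({i}) } (this is f_i^⊤(f_i(c)), the i-th covering map followed by its canonical adjoint). Then g(c) = c for every c ∈ C if and only if the neuron i is free, i.e. √[C]{i} ∉ C. In other words, the i-th covering map f_i is a Boolean matrix factorization if and only if i is free. -/

import Mathlib

/-!
Every codeword containing `τ` contains `√[C]τ`, so `tk_C(τ ∪ {j}) = tk_C(τ)` exactly when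
`j ∈ √[C]τ`. Hence for `c ∈ C` the round trip `g(c)` lies between `c ∖ {i}` and `c`, and for
`i ∈ c` it contains `i` iff some `j ∈ c` lies outside `√[C]{i}`; since `√[C]{i} ⊆ c`, this fails
exactly when `c = √[C]{i}`. As `i ∈ √[C]{i}`, `g` fixes all of `C` iff `√[C]{i} ∉ C`.
-/

/-- The trunk of `τ` in the code `C`: all codewords containing `τ`. -/
def trunk {n : ℕ} (C : Finset (Finset (Fin n))) (τ : Finset (Fin n)) :
    Finset (Finset (Fin n)) :=
  C.filter (fun σ => τ ⊆ σ)

/-- The root of a family of subsets: the intersection of all its members. -/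
def root {n : ℕ} (S : Finset (Finset (Fin n))) : Finset (Fin n) :=
  S.inf id

/-- The root of `τ` relative to `C`. -/
def rootRel {n : ℕ} (C : Finset (Finset (Fin n))) (τ : Finset (Fin n)) :
    Finset (Fin n) :=
  root (trunk C τ)

/-- A code is reduced if it has no trivial neurons (empty trunks) and no
redundant neurons. -/
def Reduced {n : ℕ} (C : Finset (Finset (Fin n))) : Prop :=
  (∀ i : Fin n, (trunk C {i}).Nonempty) ∧
    ∀ i : Fin n, ¬ ∃ σ : Finset (Fin n), i ∉ σ ∧ trunk C {i} = trunk C σ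

/-- The composite `f_i^⊤ ∘ f_i` of the `i`-th covering map with its canonical
adjoint: `g(c) = (c ∖ {i}) ∪ ⋃ {√[C]({i,j}) : {i,j} ⊆ c, tk_C({i,j}) ≠ tk_C({i})}`. -/
def coverRoundTrip {n : ℕ} (C : Finset (Finset (Fin n))) (i : Fin n)
    (c : Finset (Fin n)) : Finset (Fin n) :=
  c.erase i ∪
    (Finset.univ.filter (fun j : Fin n =>
        ({i, j} : Finset (Fin n)) ⊆ c ∧ trunk C {i, j} ≠ trunk C {i})).sup
      (fun j => rootRel C {i, j})

open Finset

section Roots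

variable {n : ℕ} {C : Finset (Finset (Fin n))}

theorem mem_trunk {τ σ : Finset (Fin n)} : σ ∈ trunk C τ ↔ σ ∈ C ∧ τ ⊆ σ :=
  mem_filter

theorem mem_rootRel {τ : Finset (Fin n)} {a : Fin n} :
    a ∈ rootRel C τ ↔ ∀ σ ∈ trunk C τ, a ∈ σ := by
  simp [rootRel, root, mem_inf]

theorem subset_rootRel (τ : Finset (Fin n)) : τ ⊆ rootRel C τ :=
  fun _ ha => mem_rootRel.2 fun _ hσ => (mem_trunk.1 hσ).2 ha

theorem rootRel_subset {τ σ : Finset (Fin n)} (hσ : σ ∈ C) (hτ : τ ⊆ σ) : rootRel C τ ⊆ σ :=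
  fun _ ha => mem_rootRel.1 ha σ (mem_trunk.2 ⟨hσ, hτ⟩)

theorem trunk_union_eq_iff {τ ρ : Finset (Fin n)} :
    trunk C (τ ∪ ρ) = trunk C τ ↔ ρ ⊆ rootRel C τ := by
  simp only [Finset.ext_iff, mem_trunk, subset_iff, mem_rootRel]
  grind

end Roots

section RoundTrip

variable {n : ℕ} {C : Finset (Finset (Fin n))} {i : Fin n} {c : Finset (Fin n)}

theorem coverRoundTrip_subset (hc : c ∈ C) : coverRoundTrip C i c ⊆ c :=
  union_subset (erase_subset i c) <| Finset.sup_le fun _ hj =>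
    rootRel_subset hc (mem_filter.1 hj).2.1

theorem mem_coverRoundTrip_self_iff :
    i ∈ coverRoundTrip C i c ↔ i ∈ c ∧ ¬ c ⊆ rootRel C {i} := by
  have hpair (j : Fin n) : ({i, j} : Finset (Fin n)) = {i} ∪ {j} := insert_eq i {j}
  have hi (j : Fin n) : i ∈ rootRel C ({i} ∪ {j}) := subset_rootRel _ (by simp)
  simp only [coverRoundTrip, mem_union, mem_erase, ne_eq, not_true_eq_false, false_and,
    false_or, mem_sup, mem_filter, mem_univ, true_and, hpair, trunk_union_eq_iff,
    union_subset_iff, singleton_subset_iff, not_subset, hi, and_true]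
  grind

theorem coverRoundTrip_eq_self_iff (hc : c ∈ C) :
    coverRoundTrip C i c = c ↔ (i ∈ c → ¬ c ⊆ rootRel C {i}) := by
  have herase : c.erase i ⊆ coverRoundTrip C i c := subset_union_left
  rw [(coverRoundTrip_subset hc).ge_iff_eq.symm]
  constructor
  · exact fun h hi => (mem_coverRoundTrip_self_iff.1 (h hi)).2
  · intro h x hx
    by_cases hxi : x = i
    · subst hxi
      exact mem_coverRoundTrip_self_iff.2 ⟨hx, h hx⟩
    · exact herase (mem_erase.2 ⟨hxi, hx⟩)

end RoundTrip

theorem coveringMap_BMF_iff_free_general (n : ℕ) (C : Finset (Finset (Fin n)))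
    (i : Fin n) :
    (∀ c ∈ C, coverRoundTrip C i c = c) ↔ rootRel C {i} ∉ C := by
  constructor
  · intro hfix hroot
    exact (coverRoundTrip_eq_self_iff hroot).1 (hfix _ hroot)
      (subset_rootRel _ (mem_singleton_self i)) subset_rfl
  · intro hfree c hc
    refine (coverRoundTrip_eq_self_iff hc).2 fun hi hsub => hfree ?_
    rwa [← subset_antisymm hsub (rootRel_subset hc (singleton_subset_iff.2 hi))]

/-- For a reduced code `C` and a neuron `i`, the composite `f_i^⊤ ∘ f_i` of the
`i`-th covering map with its canonical adjoint is the identity on `C` (i.e. `f_i`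
is a Boolean matrix factorization) if and only if `i` is free, i.e.
`√[C]{i} ∉ C`. -/
theorem coveringMap_BMF_iff_free (n : ℕ) (C : Finset (Finset (Fin n)))
    (i : Fin n) (hC : Reduced C) :
    (∀ c ∈ C, coverRoundTrip C i c = c) ↔ rootRel C {i} ∉ C :=
  coveringMap_BMF_iff_free_general n C i
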